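/- For every integer N ≥ 0, the dimension of FSh₂(N) as a ℚ-vector space equals 0 if N is even, and equals ⌊N/3⌋ + 1 if N is odd. -/

import Mathlib

noncomputable section

open MvPolynomial

/-- The polynomial ring `ℚ[X,Y]`, with `X = X 0` and `Y = X 1`. -/
abbrev R2 : Type := MvPolynomial (Fin 2) ℚ

/-- The field of rational functions `ℚ(X,Y)`. -/
abbrev K2 : Type := FractionRing R2

/-- The substitution `(X, Y) ↦ (X + Y, -Y)` on polynomials. -/
def fayA : R2 →ₐ[ℚ] R2 := aeval ![X 0 + X 1, -X 1]

/-- The substitution `(X, Y) ↦ (-X - Y, X)` on polynomials. -/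
def rotA : R2 →ₐ[ℚ] R2 := aeval ![-X 0 - X 1, X 0]

/-- The substitution `(X, Y) ↦ (Y, X)` on polynomials. -/
def swapA : R2 →ₐ[ℚ] R2 := aeval ![X 1, X 0]

lemma fayA_invol : fayA.comp fayA = AlgHom.id ℚ R2 := by
  apply algHom_ext
  intro i
  fin_cases i <;> simp [fayA]

lemma rotA_cube : rotA.comp (rotA.comp rotA) = AlgHom.id ℚ R2 := by
  apply algHom_ext
  intro i
  fin_cases i <;> simp [rotA]

lemma swapA_invol : swapA.comp swapA = AlgHom.id ℚ R2 := by
  apply algHom_ext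
  intro i
  fin_cases i <;> simp [swapA]

lemma fayA_inj : Function.Injective fayA :=
  Function.LeftInverse.injective (g := fayA) fun x => by
    simpa using DFunLike.congr_fun fayA_invol x

lemma rotA_inj : Function.Injective rotA :=
  Function.LeftInverse.injective (g := rotA.comp rotA) fun x => by
    simpa using DFunLike.congr_fun rotA_cube x

lemma swapA_inj : Function.Injective swapA :=
  Function.LeftInverse.injective (g := swapA) fun x => by
    simpa using DFunLike.congr_fun swapA_invol x

/-- Lift an injective substitution on `ℚ[X,Y]` to the fraction field `ℚ(X,Y)`. -/
def liftK (φ : R2 →ₐ[ℚ] R2) (hφ : Function.Injective φ) : K2 →+* K2 :=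
  IsFractionRing.lift (g := (algebraMap R2 K2).comp φ.toRingHom)
    (fun _ _ h => hφ (IsFractionRing.injective R2 K2 h))

/-- `P(X,Y) ↦ P(X+Y, -Y)` as a `ℚ`-linear endomorphism of `ℚ(X,Y)`. -/
def fayL : K2 →ₗ[ℚ] K2 := (liftK fayA fayA_inj).toAddMonoidHom.toRatLinearMap

/-- `P(X,Y) ↦ P(-X-Y, X)` as a `ℚ`-linear endomorphism of `ℚ(X,Y)`. -/
def rotL : K2 →ₗ[ℚ] K2 := (liftK rotA rotA_inj).toAddMonoidHom.toRatLinearMap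

/-- `P(X,Y) ↦ P(Y, X)` as a `ℚ`-linear endomorphism of `ℚ(X,Y)`. -/
def swapL : K2 →ₗ[ℚ] K2 := (liftK swapA swapA_inj).toAddMonoidHom.toRatLinearMap

/-- The inclusion `ℚ[X,Y] → ℚ(X,Y)` as a `ℚ`-linear map. -/
def algL : R2 →ₗ[ℚ] K2 := (algebraMap R2 K2).toAddMonoidHom.toRatLinearMap

/-- The element `X·Y ∈ ℚ(X,Y)`. -/
def xyK : K2 := algebraMap R2 K2 (X 0 * X 1)

/-- The length-two Fay-shuffle space `FSh₂(N)`: rational functions `P(X,Y)`,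
homogeneous of degree `N - 2` with at most simple poles along `X = 0` and `Y = 0`
and no other poles (equivalently, `X·Y·P` is a homogeneous polynomial of degree `N`),
satisfying the Fay relation `P(X,Y) + P(X+Y,-Y) + P(-X-Y,X) = 0` and the shuffle
relation `P(X,Y) + P(Y,X) = 0`. -/
def FSh (N : ℕ) : Submodule ℚ K2 :=
  (Submodule.map algL (homogeneousSubmodule (Fin 2) ℚ N)).comap (LinearMap.mulLeft ℚ xyK)
    ⊓ LinearMap.ker (LinearMap.id + fayL + rotL)
    ⊓ LinearMap.ker (LinearMap.id + swapL)

/-!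
Multiplying by `X·Y` identifies `FSh₂(N)` with the space of antisymmetric homogeneous
polynomials `Q` of degree `N` with `(X+Y) Q(X,Y) = X Q(X+Y,-Y) + Y Q(-X-Y,X)`.
Swapping `X` and `Y` in this relation and using `Q(-X,-Y) = (-1)^N Q` forces `Q = 0` for even `N`.

For odd `N`, evaluate at `(1, ω)` with `ω` a primitive cube root of unity. The kernel is
`(X² + XY + Y²)` times the space in degree `N - 2`, since this norm form of `ℚ(ω)` vanishes at
`(1, ω)`. The relation forces the value `v` to satisfy `conj v = (ω + ω^(N+2)) v`: for
`N ≡ 2 mod 3` this gives `v = 0`, otherwise it cuts out a `ℚ`-line, which is attained by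
`(XY(X+Y))^(2b) (X - Y)` or `(XY(X+Y))^(2b) XY(X - Y)`. Hence the dimension grows by one from
`N - 2` to `N` unless `N ≡ 2 mod 3`, starting from `1` at `N = 1`.
-/

theorem MvPolynomial.finrank_homogeneousSubmodule {σ R : Type*} [Fintype σ] [CommSemiring R]
    [StrongRankCondition R] (n : ℕ) :
    Module.finrank R (homogeneousSubmodule σ R n) = (Fintype.card σ + n - 1).choose n := by
  classical
  have hdeg : {d : σ →₀ ℕ | d.degree = n} =
      ((Finset.univ : Finset σ).finsuppAntidiag n : Set (σ →₀ ℕ)) := by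
    ext d
    simp [Finsupp.degree_eq_sum]
  rw [homogeneousSubmodule_eq_finsupp_supported, hdeg,
    (AddMonoidAlgebra.supportedEquivFinsupp _).finrank_eq, Module.finrank_finsupp_self]
  simp [Finset.card_finsuppAntidiag_nat_eq_choose]

theorem MvPolynomial.IsHomogeneous.aeval_mul_left {σ R A : Type*} [CommSemiring R]
    [CommSemiring A] [Algebra R A] {Q : MvPolynomial σ R} {n : ℕ} (hQ : Q.IsHomogeneous n)
    (t : A) (x : σ → A) :
    MvPolynomial.aeval (fun i => t * x i) Q = t ^ n * MvPolynomial.aeval x Q := by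
  rw [aeval_def, aeval_def, eval₂_eq, eval₂_eq, Finset.mul_sum]
  refine Finset.sum_congr rfl fun d hd => ?_
  simp_rw [mul_pow, Finset.prod_mul_distrib, Finset.prod_pow_eq_pow_sum,
    ← hQ.degree_eq_sum_deg_support hd]
  ring

namespace FayShuffle

local notation "HS" => homogeneousSubmodule (Fin 2) ℚ

@[simp] lemma fayA_X_zero : fayA (X 0) = X 0 + X 1 := by simp [fayA]
@[simp] lemma fayA_X_one : fayA (X 1) = -X 1 := by simp [fayA]
@[simp] lemma rotA_X_zero : rotA (X 0) = -X 0 - X 1 := by simp [rotA]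
@[simp] lemma rotA_X_one : rotA (X 1) = X 0 := by simp [rotA]
@[simp] lemma swapA_X_zero : swapA (X 0) = X 1 := by simp [swapA]
@[simp] lemma swapA_X_one : swapA (X 1) = X 0 := by simp [swapA]

lemma X_zero_add_X_one_ne_zero : (X 0 + X 1 : R2) ≠ 0 := fun h => by
  simpa using congrArg (aeval ![(1 : ℚ), 0]) h

def fayNum : R2 →ₗ[ℚ] R2 :=
  LinearMap.mulLeft ℚ (X 0 + X 1) - LinearMap.mulLeft ℚ (X 0) ∘ₗ fayA.toLinearMap
    - LinearMap.mulLeft ℚ (X 1) ∘ₗ rotA.toLinearMap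

lemma fayNum_apply (Q : R2) : fayNum Q = (X 0 + X 1) * Q - X 0 * fayA Q - X 1 * rotA Q := rfl

def polyFSh (N : ℕ) : Submodule ℚ R2 :=
  HS N ⊓ LinearMap.ker fayNum ⊓ LinearMap.ker (LinearMap.id + swapA.toLinearMap)

lemma mem_polyFSh {N : ℕ} {Q : R2} :
    Q ∈ polyFSh N ↔ Q.IsHomogeneous N ∧ fayNum Q = 0 ∧ Q + swapA Q = 0 := by
  simp [polyFSh, and_assoc]

instance (N : ℕ) : FiniteDimensional ℚ (HS N) :=
  Module.Finite.iff_fg.mpr (homogeneousSubmodule_fg _ _ N)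

instance (N : ℕ) : FiniteDimensional ℚ (polyFSh N) :=
  Submodule.finiteDimensional_of_le (inf_le_left.trans inf_le_left)

lemma algebraMap_ne_zero {p : R2} (hp : p ≠ 0) : algebraMap R2 K2 p ≠ 0 :=
  (map_ne_zero_iff _ (IsFractionRing.injective R2 K2)).mpr hp

lemma xyK_ne_zero : xyK ≠ 0 :=
  algebraMap_ne_zero (mul_ne_zero (X_ne_zero _) (X_ne_zero _))

lemma liftK_algebraMap (φ : R2 →ₐ[ℚ] R2) (hφ : Function.Injective φ) (p : R2) :
    liftK φ hφ (algebraMap R2 K2 p) = algebraMap R2 K2 (φ p) :=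
  IsFractionRing.lift_algebraMap _ _

lemma liftK_div (φ : R2 →ₐ[ℚ] R2) (hφ : Function.Injective φ) (p q : R2) :
    liftK φ hφ (algebraMap R2 K2 p / algebraMap R2 K2 q) =
      algebraMap R2 K2 (φ p) / algebraMap R2 K2 (φ q) := by
  rw [map_div₀, liftK_algebraMap, liftK_algebraMap]

def divXY : R2 →ₗ[ℚ] K2 := LinearMap.mulLeft ℚ xyK⁻¹ ∘ₗ algL

lemma divXY_apply (Q : R2) : divXY Q = algebraMap R2 K2 Q / xyK := by
  rw [div_eq_inv_mul]
  rfl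

lemma divXY_injective : Function.Injective divXY := fun p q h => by
  rw [divXY_apply, divXY_apply, div_left_inj' xyK_ne_zero] at h
  exact IsFractionRing.injective R2 K2 h

lemma divXY_add_swapL_eq_zero_iff (Q : R2) :
    divXY Q + swapL (divXY Q) = 0 ↔ Q + swapA Q = 0 := by
  have h : swapL (divXY Q) = divXY (swapA Q) := by
    change liftK swapA swapA_inj (divXY Q) = _
    rw [divXY_apply, divXY_apply, xyK, liftK_div, map_mul, swapA_X_zero, swapA_X_one,
      mul_comm (X 1)]
  rw [h, ← map_add, ← map_zero divXY, divXY_injective.eq_iff]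

lemma divXY_add_fayL_add_rotL_eq_zero_iff (Q : R2) :
    divXY Q + fayL (divXY Q) + rotL (divXY Q) = 0 ↔ fayNum Q = 0 := by
  have hx := algebraMap_ne_zero (X_ne_zero (R := ℚ) (0 : Fin 2))
  have hy := algebraMap_ne_zero (X_ne_zero (R := ℚ) (1 : Fin 2))
  have hxy : algebraMap R2 K2 (X 0) + algebraMap R2 K2 (X 1) ≠ 0 := by
    rw [← map_add]
    exact algebraMap_ne_zero X_zero_add_X_one_ne_zero
  have h : divXY Q + fayL (divXY Q) + rotL (divXY Q) =
      algebraMap R2 K2 (fayNum Q) / algebraMap R2 K2 (X 0 * X 1 * (X 0 + X 1)) := by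
    change divXY Q + liftK fayA fayA_inj (divXY Q) + liftK rotA rotA_inj (divXY Q) = _
    rw [divXY_apply, xyK, liftK_div, liftK_div]
    simp only [fayNum_apply, map_mul, map_add, map_sub, map_neg, fayA_X_zero, fayA_X_one,
      rotA_X_zero, rotA_X_one, ← neg_add']
    field_simp
    ring
  rw [h, div_eq_zero_iff, or_iff_left (algebraMap_ne_zero (mul_ne_zero
    (mul_ne_zero (X_ne_zero _) (X_ne_zero _)) X_zero_add_X_one_ne_zero)),
    map_eq_zero_iff _ (IsFractionRing.injective R2 K2)]

lemma FSh_eq_map_divXY (N : ℕ) : FSh N = (polyFSh N).map divXY := by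
  ext P
  simp only [FSh, Submodule.mem_inf, Submodule.mem_comap, Submodule.mem_map, LinearMap.mem_ker,
    LinearMap.add_apply, LinearMap.id_apply, LinearMap.mulLeft_apply, mem_homogeneousSubmodule]
  constructor
  · rintro ⟨⟨⟨Q, hQ, hQP⟩, hfay⟩, hswap⟩
    obtain rfl : divXY Q = P := by
      rw [divXY_apply, div_eq_iff xyK_ne_zero, mul_comm]
      exact hQP
    exact ⟨Q, mem_polyFSh.mpr ⟨hQ, (divXY_add_fayL_add_rotL_eq_zero_iff Q).mp hfay,
      (divXY_add_swapL_eq_zero_iff Q).mp hswap⟩, rfl⟩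
  · rintro ⟨Q, hQ, rfl⟩
    obtain ⟨hhom, hfay, hswap⟩ := mem_polyFSh.mp hQ
    refine ⟨⟨⟨Q, hhom, ?_⟩, (divXY_add_fayL_add_rotL_eq_zero_iff Q).mpr hfay⟩,
      (divXY_add_swapL_eq_zero_iff Q).mpr hswap⟩
    rw [divXY_apply, mul_div_cancel₀ _ xyK_ne_zero]
    rfl

lemma finrank_FSh (N : ℕ) : Module.finrank ℚ (FSh N) = Module.finrank ℚ (polyFSh N) := by
  rw [FSh_eq_map_divXY]
  exact (Submodule.equivMapOfInjective _ divXY_injective _).finrank_eq.symm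

lemma swapA_fayA (Q : R2) : swapA (fayA Q) = rotA (aeval (fun i => -X i) Q) := by
  suffices h : swapA.comp fayA = rotA.comp (aeval fun i => -X i) from DFunLike.congr_fun h Q
  refine algHom_ext fun i => ?_
  fin_cases i <;> simp [add_comm]

lemma swapA_rotA (Q : R2) : swapA (rotA Q) = fayA (aeval (fun i => -X i) Q) := by
  suffices h : swapA.comp rotA = fayA.comp (aeval fun i => -X i) from DFunLike.congr_fun h Q
  refine algHom_ext fun i => ?_
  fin_cases i <;> simp [sub_eq_add_neg, add_comm]

lemma polyFSh_eq_bot_of_even {N : ℕ} (hN : Even N) : polyFSh N = ⊥ := by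
  refine (Submodule.eq_bot_iff _).mpr fun Q hQ => ?_
  obtain ⟨hhom, hfay, hswap⟩ := mem_polyFSh.mp hQ
  have hneg : aeval (fun i => -X i) Q = Q := by
    simpa [hN.neg_one_pow] using hhom.aeval_mul_left (-1 : R2) X
  have hfay' := congrArg swapA hfay
  simp only [fayNum_apply, map_sub, map_mul, map_add, swapA_X_zero, swapA_X_one, swapA_fayA,
    swapA_rotA, hneg, map_zero] at hfay hfay'
  have h : (2 * (X 0 + X 1)) * Q = 0 := by
    linear_combination hfay - hfay' + (X 0 + X 1) * hswap
  exact (mul_eq_zero.mp h).resolve_left (mul_ne_zero two_ne_zero X_zero_add_X_one_ne_zero)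

open Polynomial in
instance : Fact (Irreducible (cyclotomic 3 ℚ)) := ⟨cyclotomic.irreducible_rat (by norm_num)⟩

abbrev Qω : Type := AdjoinRoot (Polynomial.cyclotomic 3 ℚ)

def ω : Qω := AdjoinRoot.root _

lemma ω_sq_add_ω_add_one : ω ^ 2 + ω + 1 = 0 := by
  simpa [ω, Polynomial.cyclotomic_three] using
    AdjoinRoot.eval₂_root (Polynomial.cyclotomic 3 ℚ)

lemma ω_pow_three : ω ^ 3 = 1 := by linear_combination (ω - 1) * ω_sq_add_ω_add_one

lemma ω_pow_eq_pow_mod (n : ℕ) : ω ^ n = ω ^ (n % 3) := by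
  conv_lhs => rw [← Nat.div_add_mod n 3, pow_add, pow_mul, ω_pow_three, one_pow, one_mul]

lemma ω_ne_zero : ω ≠ 0 := fun h => by simpa [h] using ω_pow_three

lemma one_sub_ω_ne_zero : 1 - ω ≠ 0 := fun h => by
  have : (3 : Qω) = 0 := by linear_combination ω_sq_add_ω_add_one + (ω + 2) * h
  norm_num at this

lemma natDegree_cyclotomic_three : (Polynomial.cyclotomic 3 ℚ).natDegree = 2 := by
  rw [Polynomial.natDegree_cyclotomic, Nat.totient_prime Nat.prime_three]

def basisQω : Module.Basis (Fin 2) ℚ Qω :=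
  (AdjoinRoot.powerBasis (Polynomial.cyclotomic.monic 3 ℚ).ne_zero).basis.reindex
    (finCongr natDegree_cyclotomic_three)

lemma basisQω_apply (i : Fin 2) : basisQω i = ω ^ (i : ℕ) := by
  simp only [basisQω, Module.Basis.coe_reindex, PowerBasis.coe_basis, AdjoinRoot.powerBasis_gen,
    Function.comp_apply, ω]
  rfl

lemma finrank_Qω : Module.finrank ℚ Qω = 2 := by
  rw [Module.finrank_eq_card_basis basisQω, Fintype.card_fin]

instance : FiniteDimensional ℚ Qω := basisQω.finiteDimensional_of_finite

lemma aeval_ω_sq_cyclotomic_three :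
    Polynomial.aeval (ω ^ 2) (Polynomial.cyclotomic 3 ℚ) = 0 := by
  simp only [Polynomial.cyclotomic_three, map_add, map_pow, Polynomial.aeval_X, map_one]
  linear_combination ω_sq_add_ω_add_one + ω * ω_pow_three

def conj : Qω →ₐ[ℚ] Qω :=
  AdjoinRoot.liftAlgHom _ (Algebra.ofId ℚ Qω) (ω ^ 2) aeval_ω_sq_cyclotomic_three

lemma conj_ω : conj ω = ω ^ 2 := AdjoinRoot.liftAlgHom_root _ _ _ _

lemma conj_conj (v : Qω) : conj (conj v) = v := by
  suffices h : conj.comp conj = AlgHom.id ℚ Qω from DFunLike.congr_fun h v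
  apply AdjoinRoot.algHom_ext
  change conj (conj ω) = ω
  rw [conj_ω, map_pow, conj_ω, ← pow_mul, show 2 * 2 = 3 + 1 by rfl, pow_succ, ω_pow_three,
    one_mul]

def evalω : R2 →ₐ[ℚ] Qω := aeval ![1, ω]

@[simp] lemma evalω_X_zero : evalω (X 0) = 1 := by simp [evalω]
@[simp] lemma evalω_X_one : evalω (X 1) = ω := by simp [evalω]

lemma evalω_fayA {N : ℕ} {Q : R2} (hQ : Q.IsHomogeneous N) :
    evalω (fayA Q) = (-ω ^ 2) ^ N * conj (evalω Q) := by
  have hpt : (fun i => evalω (![X 0 + X 1, -X 1] i)) = fun i => -ω ^ 2 * conj (![1, ω] i) := by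
    funext i
    fin_cases i
    · change evalω (X 0 + X 1) = -ω ^ 2 * conj 1
      rw [map_add, evalω_X_zero, evalω_X_one, map_one]
      linear_combination ω_sq_add_ω_add_one
    · change evalω (-X 1) = -ω ^ 2 * conj ω
      rw [map_neg, evalω_X_one, conj_ω]
      linear_combination ω * ω_pow_three
  calc evalω (fayA Q) = aeval (fun i => -ω ^ 2 * conj (![1, ω] i)) Q := by
        rw [← hpt]; exact comp_aeval_apply _ _ _
    _ = (-ω ^ 2) ^ N * conj (evalω Q) := by
        rw [hQ.aeval_mul_left, evalω, comp_aeval_apply]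

lemma evalω_rotA {N : ℕ} {Q : R2} (hQ : Q.IsHomogeneous N) :
    evalω (rotA Q) = (ω ^ 2) ^ N * evalω Q := by
  have hpt : (fun i => evalω (![-X 0 - X 1, X 0] i)) = fun i => ω ^ 2 * ![1, ω] i := by
    funext i
    fin_cases i
    · change evalω (-X 0 - X 1) = ω ^ 2 * 1
      rw [map_sub, map_neg, evalω_X_zero, evalω_X_one]
      linear_combination -ω_sq_add_ω_add_one
    · change evalω (X 0) = ω ^ 2 * ω
      rw [evalω_X_zero]
      linear_combination -ω_pow_three
  calc evalω (rotA Q) = aeval (fun i => ω ^ 2 * ![1, ω] i) Q := by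
        rw [← hpt]; exact comp_aeval_apply _ _ _
    _ = (ω ^ 2) ^ N * evalω Q := hQ.aeval_mul_left _ _

lemma conj_evalω {N : ℕ} (hN : Odd N) {Q : R2} (hQ : Q ∈ polyFSh N) :
    conj (evalω Q) = (ω + ω ^ (N + 2)) * evalω Q := by
  obtain ⟨hhom, hfay, -⟩ := mem_polyFSh.mp hQ
  have h := congrArg evalω hfay
  rw [fayNum_apply, map_sub, map_sub, map_mul, map_mul, map_mul, map_add, evalω_X_zero,
    evalω_X_one, evalω_fayA hhom, evalω_rotA hhom, hN.neg_pow, map_zero] at h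
  have hw : (ω ^ N) ^ 3 = 1 := by rw [← pow_mul, mul_comm, pow_mul, ω_pow_three, one_pow]
  linear_combination ω ^ N * h - (conj (evalω Q) - ω * evalω Q) * hw
    - ω ^ N * evalω Q * ω_sq_add_ω_add_one

lemma evalω_eq_zero_of_mod_three_eq_two {N : ℕ} (hN : Odd N) (hmod : N % 3 = 2) {Q : R2}
    (hQ : Q ∈ polyFSh N) : evalω Q = 0 := by
  have hc := conj_evalω hN hQ
  rw [ω_pow_eq_pow_mod (N + 2), show (N + 2) % 3 = 1 by omega, pow_one] at hc
  -- `conj v = 2ω v`, so `v = conj (conj v) = 4ω³ v = 4 v`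
  have h := congrArg conj hc
  rw [conj_conj, map_mul, map_add, conj_ω, hc] at h
  have h3 : (3 : Qω) * evalω Q = 0 := by
    linear_combination -h - 4 * evalω Q * ω_pow_three
  exact (mul_eq_zero.mp h3).resolve_left three_ne_zero

lemma ω_add_ω_pow_ne_one {N : ℕ} (hmod : N % 3 ≠ 2) : ω + ω ^ (N + 2) ≠ 1 := by
  rw [ω_pow_eq_pow_mod]
  intro h
  rcases (by omega : N % 3 = 0 ∨ N % 3 = 1) with h3 | h3
  · rw [show (N + 2) % 3 = 2 by omega] at h
    have : (2 : Qω) = 0 := by linear_combination ω_sq_add_ω_add_one - h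
    norm_num at this
  · rw [show (N + 2) % 3 = 0 by omega, pow_zero, add_eq_right] at h
    exact ω_ne_zero h

lemma finrank_le_one_of_conj_eq_mul {c : Qω} (hc : c ≠ 1) {V : Submodule ℚ Qω}
    (hV : ∀ v ∈ V, conj v = c * v) : Module.finrank ℚ V ≤ 1 := by
  have hV_ne_top : V ≠ ⊤ := fun h => hc (by simpa using (hV 1 (h ▸ Submodule.mem_top)).symm)
  have := Submodule.finrank_lt hV_ne_top
  rw [finrank_Qω] at this
  omega

def IsInvariant (f : R2) : Prop := fayA f = f ∧ rotA f = f ∧ swapA f = f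

lemma IsInvariant.pow {f : R2} (hf : IsInvariant f) (b : ℕ) : IsInvariant (f ^ b) := by
  obtain ⟨h1, h2, h3⟩ := hf
  exact ⟨by rw [map_pow, h1], by rw [map_pow, h2], by rw [map_pow, h3]⟩

lemma mul_mem_polyFSh_iff {f q : R2} {d N : ℕ} (hf : IsInvariant f) (hfd : f.IsHomogeneous d)
    (hf0 : f ≠ 0) (hq : q.IsHomogeneous N) : f * q ∈ polyFSh (N + d) ↔ q ∈ polyFSh N := by
  obtain ⟨hfay, hrot, hswap⟩ := hf
  have hfay' : fayNum (f * q) = f * fayNum q := by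
    simp only [fayNum_apply, map_mul, hfay, hrot]
    ring
  have hswap' : f * q + swapA (f * q) = f * (q + swapA q) := by
    rw [map_mul, hswap]
    ring
  simp only [mem_polyFSh, add_comm N d, hfd.mul hq, hq, hfay', hswap', mul_eq_zero, hf0,
    false_or, true_and]

def prodSq : R2 := (X 0 * X 1 * (X 0 + X 1)) ^ 2

lemma isInvariant_prodSq : IsInvariant prodSq := by
  refine ⟨?_, ?_, ?_⟩ <;>
    simp only [prodSq, map_pow, map_mul, map_add, fayA_X_zero, fayA_X_one, rotA_X_zero,
      rotA_X_one, swapA_X_zero, swapA_X_one] <;>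
    ring

lemma isHomogeneous_prodSq : prodSq.IsHomogeneous 6 :=
  (((isHomogeneous_X ℚ 0).mul (isHomogeneous_X ℚ 1)).mul
    ((isHomogeneous_X ℚ 0).add (isHomogeneous_X ℚ 1))).pow 2

lemma evalω_prodSq : evalω prodSq = 1 := by
  simp only [prodSq, map_pow, map_mul, map_add, evalω_X_zero, evalω_X_one]
  linear_combination (ω ^ 2 + ω - 1) * ω_sq_add_ω_add_one

lemma prodSq_ne_zero : prodSq ≠ 0 := fun h => by simpa [h] using evalω_prodSq

lemma prodSq_pow_mul_mem_polyFSh {n : ℕ} {g : R2} (hg : g ∈ polyFSh n) (b : ℕ) :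
    prodSq ^ b * g ∈ polyFSh (n + 6 * b) :=
  (mul_mem_polyFSh_iff (isInvariant_prodSq.pow b) (isHomogeneous_prodSq.pow b)
    (pow_ne_zero _ prodSq_ne_zero) (mem_polyFSh.mp hg).1).mpr hg

lemma exists_mem_polyFSh_evalω_ne_zero {N : ℕ} (hN : Odd N) (hmod : N % 3 ≠ 2) :
    ∃ Q ∈ polyFSh N, evalω Q ≠ 0 := by
  have hX (i : Fin 2) : (X i : R2).IsHomogeneous 1 := isHomogeneous_X ℚ i
  obtain ⟨b, rfl | rfl⟩ : ∃ b, N = 1 + 6 * b ∨ N = 3 + 6 * b := ⟨N / 6, by grind⟩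
  · have hg : X 0 - X 1 ∈ polyFSh 1 := by
      refine mem_polyFSh.mpr ⟨(hX 0).sub (hX 1), ?_, by simp⟩
      simp only [fayNum_apply, map_sub, fayA_X_zero, fayA_X_one, rotA_X_zero, rotA_X_one]
      ring
    refine ⟨_, prodSq_pow_mul_mem_polyFSh hg b, ?_⟩
    simpa [evalω_prodSq] using one_sub_ω_ne_zero
  · have hg : X 0 * X 1 * (X 0 - X 1) ∈ polyFSh 3 := by
      refine mem_polyFSh.mpr ⟨((hX 0).mul (hX 1)).mul ((hX 0).sub (hX 1)), ?_, ?_⟩ <;>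
        simp only [fayNum_apply, map_sub, map_mul, fayA_X_zero, fayA_X_one, rotA_X_zero,
          rotA_X_one, swapA_X_zero, swapA_X_one] <;>
        ring
    refine ⟨_, prodSq_pow_mul_mem_polyFSh hg b, ?_⟩
    simpa [evalω_prodSq] using mul_ne_zero ω_ne_zero one_sub_ω_ne_zero

def evalωOn (N : ℕ) : polyFSh N →ₗ[ℚ] Qω := evalω.toLinearMap ∘ₗ (polyFSh N).subtype

lemma finrank_range_evalωOn {N : ℕ} (hN : Odd N) :
    Module.finrank ℚ (LinearMap.range (evalωOn N)) = if N % 3 = 2 then 0 else 1 := by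
  split_ifs with hmod
  · rw [LinearMap.range_eq_bot.mpr (LinearMap.ext fun Q =>
      evalω_eq_zero_of_mod_three_eq_two hN hmod Q.2), finrank_bot]
  · refine le_antisymm (finrank_le_one_of_conj_eq_mul (ω_add_ω_pow_ne_one hmod) ?_) ?_
    · rintro _ ⟨Q, rfl⟩
      exact conj_evalω hN Q.2
    · obtain ⟨Q, hQ, hv⟩ := exists_mem_polyFSh_evalω_ne_zero hN hmod
      rw [Nat.one_le_iff_ne_zero, Ne, Submodule.finrank_eq_zero, ← Ne, Submodule.ne_bot_iff]
      exact ⟨_, ⟨⟨Q, hQ⟩, rfl⟩, hv⟩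

lemma finrank_homogeneousSubmodule_fin_two (N : ℕ) : Module.finrank ℚ (HS N) = N + 1 := by
  rw [finrank_homogeneousSubmodule, Fintype.card_fin, show 2 + N - 1 = N + 1 by omega,
    Nat.choose_succ_self_right]

def evalωHomog (N : ℕ) : HS N →ₗ[ℚ] Qω := evalω.toLinearMap ∘ₗ (HS N).subtype

lemma range_evalωHomog (N : ℕ) : LinearMap.range (evalωHomog (N + 1)) = ⊤ := by
  rw [eq_top_iff, ← basisQω.span_eq, Submodule.span_le, Set.range_subset_iff]
  intro i
  have hi : (i : ℕ) ≤ N + 1 := by omega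
  refine ⟨⟨X 0 ^ (N + 1 - i) * X 1 ^ (i : ℕ), ?_⟩, ?_⟩
  · simpa [Nat.sub_add_cancel hi] using
      (isHomogeneous_X_pow (R := ℚ) (0 : Fin 2) (N + 1 - i)).mul (isHomogeneous_X_pow 1 i)
  · simp [evalωHomog, basisQω_apply]

lemma finrank_ker_evalωHomog (N : ℕ) :
    Module.finrank ℚ (LinearMap.ker (evalωHomog (N + 2))) = N + 1 := by
  have := (evalωHomog (N + 2)).finrank_range_add_finrank_ker
  rw [range_evalωHomog, finrank_top, finrank_Qω, finrank_homogeneousSubmodule_fin_two] at this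
  omega

def normForm : R2 := X 0 ^ 2 + X 0 * X 1 + X 1 ^ 2

lemma isHomogeneous_normForm : normForm.IsHomogeneous 2 :=
  ((isHomogeneous_X_pow _ _).add ((isHomogeneous_X _ _).mul (isHomogeneous_X _ _))).add
    (isHomogeneous_X_pow _ _)

lemma evalω_normForm : evalω normForm = 0 := by
  simp only [normForm, map_add, map_mul, map_pow, evalω_X_zero, evalω_X_one]
  linear_combination ω_sq_add_ω_add_one

lemma normForm_ne_zero : normForm ≠ 0 := fun h => by
  simpa [normForm] using congrArg (aeval ![(1 : ℚ), 0]) h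

lemma isInvariant_normForm : IsInvariant normForm := by
  refine ⟨?_, ?_, ?_⟩ <;>
    simp only [normForm, map_pow, map_mul, map_add, fayA_X_zero, fayA_X_one, rotA_X_zero,
      rotA_X_one, swapA_X_zero, swapA_X_one] <;>
    ring

lemma exists_eq_normForm_mul {N : ℕ} {Q : R2} (hQ : Q.IsHomogeneous (N + 2))
    (hv : evalω Q = 0) : ∃ q : R2, q.IsHomogeneous N ∧ Q = normForm * q := by
  let mulNormForm : HS N →ₗ[ℚ] HS (N + 2) :=
    (LinearMap.mulLeft ℚ normForm ∘ₗ (HS N).subtype).codRestrict _ fun q => by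
      simpa [add_comm] using isHomogeneous_normForm.mul q.2
  have hinj : Function.Injective mulNormForm := fun a b h =>
    Subtype.ext (mul_left_cancel₀ normForm_ne_zero (congrArg Subtype.val h))
  have hle : LinearMap.range mulNormForm ≤ LinearMap.ker (evalωHomog (N + 2)) := by
    rintro _ ⟨q, rfl⟩
    simp [mulNormForm, evalωHomog, evalω_normForm]
  have heq := Submodule.eq_of_le_of_finrank_eq hle (by
    rw [LinearMap.finrank_range_of_inj hinj, finrank_ker_evalωHomog,
      finrank_homogeneousSubmodule_fin_two])
  obtain ⟨q, hq⟩ := heq.ge (show ⟨Q, hQ⟩ ∈ LinearMap.ker (evalωHomog (N + 2)) from hv)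
  exact ⟨q, q.2, (congrArg Subtype.val hq).symm⟩

lemma finrank_ker_evalωOn (N : ℕ) :
    Module.finrank ℚ (LinearMap.ker (evalωOn (N + 2))) = Module.finrank ℚ (polyFSh N) := by
  have hmul {q : R2} (hq : q.IsHomogeneous N) :=
    mul_mem_polyFSh_iff isInvariant_normForm isHomogeneous_normForm normForm_ne_zero hq
  let mulNormForm : polyFSh N →ₗ[ℚ] polyFSh (N + 2) :=
    (LinearMap.mulLeft ℚ normForm ∘ₗ (polyFSh N).subtype).codRestrict _ fun q =>
      (hmul (mem_polyFSh.mp q.2).1).mpr q.2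
  have hinj : Function.Injective mulNormForm := fun a b h =>
    Subtype.ext (mul_left_cancel₀ normForm_ne_zero (congrArg Subtype.val h))
  have hrange : LinearMap.range mulNormForm = LinearMap.ker (evalωOn (N + 2)) := by
    refine le_antisymm ?_ fun Q hv => ?_
    · rintro _ ⟨q, rfl⟩
      change evalω (normForm * q) = 0
      rw [map_mul, evalω_normForm, zero_mul]
    · obtain ⟨q, hq, hQq⟩ := exists_eq_normForm_mul (mem_polyFSh.mp Q.2).1 hv
      exact ⟨⟨q, (hmul hq).mp (hQq ▸ Q.2)⟩, Subtype.ext hQq.symm⟩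
  rw [← hrange, LinearMap.finrank_range_of_inj hinj]

lemma ker_evalωOn_one : LinearMap.ker (evalωOn 1) = ⊥ := by
  have hinj : Function.Injective (evalωHomog 1) :=
    (LinearMap.injective_iff_surjective_of_finrank_eq_finrank
      (by rw [finrank_homogeneousSubmodule_fin_two, finrank_Qω])).mpr
      (LinearMap.range_eq_top.mp (range_evalωHomog 0))
  refine LinearMap.ker_eq_bot'.mpr fun Q hQ => Subtype.ext ?_
  have := @hinj ⟨Q, (mem_polyFSh.mp Q.2).1⟩ 0 (hQ.trans (map_zero _).symm)
  simpa using congrArg Subtype.val this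

lemma finrank_polyFSh_of_odd : ∀ m : ℕ,
    Module.finrank ℚ (polyFSh (2 * m + 1)) = (2 * m + 1) / 3 + 1
  | 0 => by
    have := (evalωOn 1).finrank_range_add_finrank_ker
    rw [finrank_range_evalωOn odd_one, ker_evalωOn_one, finrank_bot] at this
    simpa using this.symm
  | m + 1 => by
    rw [show 2 * (m + 1) + 1 = 2 * m + 1 + 2 by ring]
    have := (evalωOn (2 * m + 1 + 2)).finrank_range_add_finrank_ker
    rw [finrank_range_evalωOn (by grind), finrank_ker_evalωOn, finrank_polyFSh_of_odd m] at this
    split_ifs at this <;> omega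

end FayShuffle

theorem dim_FSh (N : ℕ) :
    Module.finrank ℚ ↥(FSh N) = if Even N then 0 else N / 3 + 1 := by
  rw [FayShuffle.finrank_FSh]
  split_ifs with hN
  · rw [FayShuffle.polyFSh_eq_bot_of_even hN, finrank_bot]
  · obtain ⟨m, rfl⟩ := Nat.not_even_iff_odd.mp hN
    exact FayShuffle.finrank_polyFSh_of_odd m

end
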